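/- Le Cam's two-point lower bound: Let Q_1, Q_2 be two probability distributions in a class Q, let θ map distributions into a metric space with metric ρ, and let Y_1,...,Y_n be i.i.d. from some Q ∈ Q. Then inf over all estimators θ̂ of sup over Q ∈ Q of E_{Q^n}[ρ(θ̂, θ(Q))] is at least (1/8) ρ(θ(Q_1), θ(Q_2)) (1 - TV(Q_1,Q_2))^{2n}. -/

import Mathlib

/-!
The risks of `θ̂` at `Q₁` and `Q₂` add up to at least `ρ/2 · (Q₁ⁿ(T) + Q₂ⁿ(Tᶜ))` for the test
`T = {ρ(θ̂, θ(Q₁)) ≥ ρ/2}`, by Markov's inequality and the triangle inequality, where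
`ρ = ρ(θ(Q₁), θ(Q₂))`. Any such testing error dominates the total mass of the infimum measure
`Q₁ⁿ ⊓ Q₂ⁿ`, and since product measures are monotone in their factors this infimum dominates
`(Q₁ ⊓ Q₂)ⁿ`, whose mass is `(Q₁ ⊓ Q₂)(Ω)ⁿ ≥ (1 - TV)ⁿ`. So the larger of the two risks is at least
`ρ/4 · (1 - TV)ⁿ ≥ ρ/8 · (1 - TV)²ⁿ`.
-/

open MeasureTheory
open scoped ENNReal

namespace MeasureTheory.Measure

variable {α : Type*} [MeasurableSpace α]

theorem pi_mono {ι : Type*} [Fintype ι] {β : ι → Type*} [∀ i, MeasurableSpace (β i)]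
    {μ ν : ∀ i, Measure (β i)} [∀ i, SigmaFinite (μ i)] (h : ∀ i, μ i ≤ ν i) :
    Measure.pi μ ≤ Measure.pi ν := by
  refine Measure.le_iff.2 fun s hs => ?_
  have hle : (Measure.pi μ).toOuterMeasure ≤ OuterMeasure.pi fun i => (ν i).toOuterMeasure :=
    OuterMeasure.le_pi.2 fun t _ => by
      simpa only [coe_toOuterMeasure, pi_pi] using Finset.prod_le_prod' fun i _ => h i (t i)
  calc Measure.pi μ s ≤ OuterMeasure.pi (fun i => (ν i).toOuterMeasure) s := hle s
    _ = Measure.pi ν s := by rw [Measure.pi, toMeasure_apply _ _ hs]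

theorem inf_apply_univ_le (μ ν : Measure α) (t : Set α) : (μ ⊓ ν) Set.univ ≤ μ t + ν tᶜ := by
  rw [inf_apply MeasurableSet.univ]
  exact sInf_le ⟨t, by simp⟩

theorem le_inf_apply_univ {μ ν : Measure α} {c : ℝ≥0∞}
    (h : ∀ t, MeasurableSet t → c ≤ μ t + ν tᶜ) : c ≤ (μ ⊓ ν) Set.univ := by
  -- `inf_apply` ranges over all sets `t`; replacing `t` by `toMeasurable μ t` keeps `μ t` and
  -- can only shrink `ν tᶜ`.
  rw [inf_apply MeasurableSet.univ]
  refine le_sInf ?_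
  rintro _ ⟨t, rfl⟩
  calc c ≤ μ (toMeasurable μ t) + ν (toMeasurable μ t)ᶜ := h _ (measurableSet_toMeasurable μ t)
    _ ≤ μ (t ∩ Set.univ) + ν (tᶜ ∩ Set.univ) := by
      rw [measure_toMeasurable, Set.inter_univ, Set.inter_univ]
      exact add_le_add_right
        (measure_mono (μ := ν) (Set.compl_subset_compl.2 (subset_toMeasurable μ t))) _

theorem inf_apply_univ_pow_le_pi {ι : Type*} [Fintype ι] (μ ν : Measure α) [IsFiniteMeasure μ]
    (t : Set (ι → α)) :
    (μ ⊓ ν) Set.univ ^ Fintype.card ι ≤ Measure.pi (fun _ => μ) t + Measure.pi (fun _ => ν) tᶜ := by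
  have : IsFiniteMeasure (μ ⊓ ν) := isFiniteMeasure_of_le μ inf_le_left
  calc (μ ⊓ ν) Set.univ ^ Fintype.card ι = Measure.pi (fun _ : ι => μ ⊓ ν) Set.univ := by
        rw [← Set.pi_univ, pi_pi, Finset.prod_const, Finset.card_univ]
    _ ≤ (Measure.pi (fun _ => μ) ⊓ Measure.pi (fun _ => ν)) Set.univ :=
        le_inf (pi_mono fun _ => inf_le_left) (pi_mono fun _ => inf_le_right) _
    _ ≤ _ := inf_apply_univ_le _ _ t

end MeasureTheory.Measure

theorem ENNReal.le_max_of_two_mul_le_add {x a b : ℝ≥0∞} (h : 2 * x ≤ a + b) : x ≤ max a b := by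
  by_contra! hx
  have := ENNReal.add_lt_add (lt_of_le_of_lt (le_max_left a b) hx)
    (lt_of_le_of_lt (le_max_right a b) hx)
  rw [← two_mul] at this
  exact this.not_ge h

section TwoPoint

variable {Ω : Type*} [MeasurableSpace Ω]

noncomputable def tvDist (P Q : Measure Ω) : ℝ :=
  ⨆ A : {A : Set Ω // MeasurableSet A}, |(P A.1).toReal - (Q A.1).toReal|

variable (P Q : Measure Ω) [IsProbabilityMeasure P] [IsProbabilityMeasure Q]

theorem abs_toReal_sub_toReal_le_one (A : Set Ω) : |(P A).toReal - (Q A).toReal| ≤ 1 := by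
  have hP : (P A).toReal ≤ 1 := measureReal_le_one
  have hQ : (Q A).toReal ≤ 1 := measureReal_le_one
  rw [abs_sub_le_iff]
  constructor <;> linarith [(P A).toReal_nonneg, (Q A).toReal_nonneg]

theorem tvDist_le_one : tvDist P Q ≤ 1 := ciSup_le fun A => abs_toReal_sub_toReal_le_one P Q A.1

theorem abs_sub_le_tvDist {A : Set Ω} (hA : MeasurableSet A) :
    |(P A).toReal - (Q A).toReal| ≤ tvDist P Q :=
  le_ciSup (f := fun A : {A : Set Ω // MeasurableSet A} => |(P A.1).toReal - (Q A.1).toReal|)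
    ⟨1, by rintro _ ⟨A, rfl⟩; exact abs_toReal_sub_toReal_le_one P Q A.1⟩ ⟨A, hA⟩

theorem tvDist_nonneg : 0 ≤ tvDist P Q :=
  (abs_nonneg _).trans (abs_sub_le_tvDist P Q MeasurableSet.empty)

theorem ofReal_one_sub_tvDist_le_inf_apply_univ :
    ENNReal.ofReal (1 - tvDist P Q) ≤ (P ⊓ Q) Set.univ := by
  refine Measure.le_inf_apply_univ fun A hA => ?_
  have hcompl : (Q Aᶜ).toReal = 1 - (Q A).toReal := probReal_compl_eq_one_sub hA
  rw [← ENNReal.ofReal_toReal (measure_ne_top P A), ← ENNReal.ofReal_toReal (measure_ne_top Q Aᶜ),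
    ← ENNReal.ofReal_add ENNReal.toReal_nonneg ENNReal.toReal_nonneg]
  refine ENNReal.ofReal_le_ofReal ?_
  linarith [neg_abs_le ((P A).toReal - (Q A).toReal), abs_sub_le_tvDist P Q hA]

theorem ofReal_one_sub_tvDist_pow_le_pi {ι : Type*} [Fintype ι] (t : Set (ι → Ω)) :
    ENNReal.ofReal (1 - tvDist P Q) ^ Fintype.card ι ≤
      Measure.pi (fun _ => P) t + Measure.pi (fun _ => Q) tᶜ :=
  (pow_le_pow_left' (ofReal_one_sub_tvDist_le_inf_apply_univ P Q) _).trans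
    (Measure.inf_apply_univ_pow_le_pi P Q t)

end TwoPoint

section Risk

variable {X Θ : Type*} [MeasurableSpace X] [PseudoMetricSpace Θ] [MeasurableSpace Θ]
  [OpensMeasurableSpace Θ]

noncomputable def risk (P : Measure X) (est : X → Θ) (a : Θ) : ℝ≥0∞ :=
  ∫⁻ x, ENNReal.ofReal (dist (est x) a) ∂P

theorem ofReal_mul_measure_le_risk (P : Measure X) {est : X → Θ} (hest : Measurable est) (a : Θ)
    (ε : ℝ) :
    ENNReal.ofReal ε * P {x | ε ≤ dist (est x) a} ≤ risk P est a := by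
  have hmeas : Measurable fun x => ENNReal.ofReal (dist (est x) a) :=
    ((continuous_id.dist continuous_const).measurable.comp hest).ennreal_ofReal
  calc ENNReal.ofReal ε * P {x | ε ≤ dist (est x) a}
      ≤ ENNReal.ofReal ε * P {x | ENNReal.ofReal ε ≤ ENNReal.ofReal (dist (est x) a)} := by
        gcongr
        exact ENNReal.ofReal_le_ofReal
    _ ≤ risk P est a := mul_meas_ge_le_lintegral₀ hmeas.aemeasurable _

theorem exists_mul_add_compl_le_risk_add_risk (P Q : Measure X) {est : X → Θ}
    (hest : Measurable est) (a b : Θ) :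
    ∃ t, ENNReal.ofReal (dist a b / 2) * (P t + Q tᶜ) ≤ risk P est a + risk Q est b := by
  refine ⟨{x | dist a b / 2 ≤ dist (est x) a}, ?_⟩
  have hcompl : {x | dist a b / 2 ≤ dist (est x) a}ᶜ ⊆ {x | dist a b / 2 ≤ dist (est x) b} := by
    intro x hx
    simp only [Set.mem_compl_iff, Set.mem_ofPred_eq, not_le] at hx ⊢
    linarith [dist_triangle_left a b (est x)]
  rw [mul_add]
  exact add_le_add (ofReal_mul_measure_le_risk P hest a _)
    ((mul_le_mul_right (measure_mono hcompl) _).trans (ofReal_mul_measure_le_risk Q hest b _))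

end Risk

/-- Le Cam's two-point lower bound. Let `𝒬` be a class of probability distributions on a
sample space `Ω` containing `Q₁` and `Q₂`, let `θ` map distributions into a metric space
`Θ`, and let the data `Y₁, …, Yₙ` be i.i.d. from some `Q ∈ 𝒬` (with joint law the product
measure `Q^n`). Then for every (measurable) estimator `θ̂ : Ωⁿ → Θ`, the worst-case risk
over `𝒬` is at least `(1/8) ρ(θ(Q₁), θ(Q₂)) (1 - TV(Q₁, Q₂))^{2n}`: there is a `Q ∈ 𝒬`
whose risk is at least this bound. (The risk is written as a lower Lebesgue integral so
that estimators with non-integrable risk are covered.) -/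
theorem le_cam_two_point_lower_bound
    {Ω : Type*} [MeasurableSpace Ω] {Θ : Type*} [MetricSpace Θ] [MeasurableSpace Θ]
    [BorelSpace Θ]
    (𝒬 : Set (Measure Ω)) (θ : Measure Ω → Θ)
    (Q₁ Q₂ : Measure Ω) [IsProbabilityMeasure Q₁] [IsProbabilityMeasure Q₂]
    (hQ₁ : Q₁ ∈ 𝒬) (hQ₂ : Q₂ ∈ 𝒬)
    (tv : ℝ)
    (htv : tv = ⨆ A : {A : Set Ω // MeasurableSet A},
      |(Q₁ A.1).toReal - (Q₂ A.1).toReal|)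
    (n : ℕ) (est : (Fin n → Ω) → Θ) (hest : Measurable est) :
    ∃ Q ∈ 𝒬, ENNReal.ofReal
        ((1 / 8) * dist (θ Q₁) (θ Q₂) * (1 - tv) ^ (2 * n)) ≤
      ∫⁻ y, ENNReal.ofReal (dist (est y) (θ Q)) ∂(Measure.pi fun _ : Fin n => Q) := by
  change tv = tvDist Q₁ Q₂ at htv
  subst htv
  set δ := dist (θ Q₁) (θ Q₂)
  set s := 1 - tvDist Q₁ Q₂
  have hs₀ : 0 ≤ s := sub_nonneg.2 (tvDist_le_one Q₁ Q₂)
  have hs₁ : s ≤ 1 := sub_le_self 1 (tvDist_nonneg Q₁ Q₂)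
  obtain ⟨t, ht⟩ := exists_mul_add_compl_le_risk_add_risk (Measure.pi fun _ : Fin n => Q₁)
    (Measure.pi fun _ : Fin n => Q₂) hest (θ Q₁) (θ Q₂)
  have htest := ofReal_one_sub_tvDist_pow_le_pi Q₁ Q₂ t
  rw [Fintype.card_fin, ← ENNReal.ofReal_pow hs₀] at htest
  have hbound : 2 * ENNReal.ofReal (1 / 8 * δ * s ^ (2 * n)) ≤
      ENNReal.ofReal (δ / 2) * ENNReal.ofReal (s ^ n) := by
    rw [← ENNReal.ofReal_ofNat 2, ← ENNReal.ofReal_mul zero_le_two,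
      ← ENNReal.ofReal_mul (by positivity), pow_mul', sq]
    refine ENNReal.ofReal_le_ofReal ?_
    have hpow : s ^ n * s ^ n ≤ s ^ n := mul_le_of_le_one_left (by positivity) (pow_le_one₀ hs₀ hs₁)
    nlinarith [dist_nonneg (x := θ Q₁) (y := θ Q₂)]
  have hmax := ENNReal.le_max_of_two_mul_le_add (hbound.trans ((mul_le_mul_right htest _).trans ht))
  rcases max_choice (risk (Measure.pi fun _ : Fin n => Q₁) est (θ Q₁))
    (risk (Measure.pi fun _ : Fin n => Q₂) est (θ Q₂)) with h | h
  · exact ⟨Q₁, hQ₁, by rwa [h] at hmax⟩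
  · exact ⟨Q₂, hQ₂, by rwa [h] at hmax⟩
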